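/- arXiv:1903.08266 — 5 statements merged into one kernel-verified Lean document; each statement's English description precedes it below -/
import Mathlib

section
/- Let n > 1 and let 0 ≤ t ≤ n be an integer. Then r_3(ℤ_4^n) ≥ ∑_{i=t+1}^{n} C(n, i) · C₂(i, i−t), where C(n,i) is the binomial coefficient and C₂(i, d) denotes the largest possible size of a (possibly non-linear) binary code in 𝔽_2^i with pairwise Hamming distance at least d between distinct codewords. Consequently r_3(ℤ_4^n) ≥ max_{0 ≤ t ≤ n} ∑_{i=t+1}^{n} C(n,i) · C₂(i, i−t). -/
/-- `S ⊆ (ℤ/mℤ)^n` contains no proper `k`-term arithmetic progression. -/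
def ProgFree (m k : ℕ) {n : ℕ} (S : Finset (Fin n → ZMod m)) : Prop :=
  ¬ ∃ x d : Fin n → ZMod m,
      (Function.Injective fun i : Fin k => x + (i : ℕ) • d) ∧
      ∀ i : Fin k, x + (i : ℕ) • d ∈ S

/-- Maximal size of a subset of `(ℤ/mℤ)^n` without a proper `k`-term AP. -/
noncomputable def rAP (k m n : ℕ) : ℕ :=
  sSup {c : ℕ | ∃ S : Finset (Fin n → ZMod m), ProgFree m k S ∧ S.card = c}

/-- `maxCode i d`: the largest size of a (possibly non-linear) binary code in
`𝔽₂^i` with pairwise Hamming distance at least `d` between distinct codewords. -/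
noncomputable def maxCode (i d : ℕ) : ℕ :=
  sSup {c : ℕ | ∃ T : Finset (Fin i → ZMod 2),
    (∀ x ∈ T, ∀ y ∈ T, x ≠ y → d ≤ hammingDist x y) ∧ T.card = c}

/-!
Over every support `A ⊆ [n]` with `|A| > t` place an optimal binary code of length `|A|` and
minimum distance `|A| - t`, written as vectors of `(ℤ/4)^n` with entries `±1` on `A` and `0`
off `A`. If `a, b, c` is a 3-term progression of such vectors then `a + c = 2b`, and since
every entry lies in `{0, ±1}` this forces, coordinatewise, `a` and `c` to have the same support
and to agree wherever `b` is nonzero. So `a` and `c` are codewords of the same code that agree on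
the more than `t` coordinates of the support of `b`: they are at distance `< |A| - t`, hence equal.
-/

open Finset Function

section ProgressionFree

lemma eq_zero_iff_and_eq_of_add_eq_two_mul {u v w : ZMod 4} (hu : u ≠ 2) (hv : v ≠ 2)
    (hw : w ≠ 2) (h : u + w = 2 * v) : (u = 0 ↔ w = 0) ∧ (v ≠ 0 → u = w ∧ u ≠ 0) := by
  revert u v w; decide

variable {ι : Type*} {a b c : ι → ZMod 4}

lemma eq_zero_iff_of_add_eq_two_nsmul (ha : ∀ j, a j ≠ 2) (hb : ∀ j, b j ≠ 2)
    (hc : ∀ j, c j ≠ 2) (h : a + c = 2 • b) (j : ι) : a j = 0 ↔ c j = 0 :=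
  (eq_zero_iff_and_eq_of_add_eq_two_mul (ha j) (hb j) (hc j)
    (by simpa using congrFun h j)).1

lemma hammingDist_add_hammingNorm_le_of_add_eq_two_nsmul [Fintype ι] (ha : ∀ j, a j ≠ 2)
    (hb : ∀ j, b j ≠ 2) (hc : ∀ j, c j ≠ 2) (h : a + c = 2 • b) :
    hammingDist a c + hammingNorm b ≤ hammingNorm a := by
  have hcoord j := eq_zero_iff_and_eq_of_add_eq_two_mul (ha j) (hb j) (hc j)
    (by simpa using congrFun h j)
  classical
  rw [hammingDist, hammingNorm, hammingNorm, ← card_union_of_disjoint]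
  · refine card_le_card fun j => ?_
    simp only [mem_union, mem_filter, mem_univ, true_and]
    rintro (hac | hb0)
    · exact fun ha0 => hac (ha0.trans ((hcoord j).1.1 ha0).symm)
    · exact ((hcoord j).2 hb0).2
  · exact disjoint_filter.2 fun j _ hac hb0 => hac ((hcoord j).2 hb0).1

theorem progFree_three_four_of_hammingNorm_le {n t : ℕ} {S : Finset (Fin n → ZMod 4)}
    (hS : ∀ x ∈ S, ∀ j, x j ≠ 2) (hnorm : ∀ x ∈ S, t < hammingNorm x)
    (hdist : ∀ x ∈ S, ∀ z ∈ S, x ≠ z → (∀ j, x j = 0 ↔ z j = 0) →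
      hammingNorm x ≤ hammingDist x z + t) :
    ProgFree 4 3 S := by
  rintro ⟨x, d, hinj, hmem⟩
  have ha : x ∈ S := by simpa using hmem 0
  have hb : x + d ∈ S := by simpa using hmem 1
  have hc : x + 2 • d ∈ S := by simpa using hmem 2
  have hap : x + (x + 2 • d) = 2 • (x + d) := by module
  have hac : x ≠ x + 2 • d := fun h => absurd (@hinj 0 2 (by simpa using h)) (by decide)
  have := hammingDist_add_hammingNorm_le_of_add_eq_two_nsmul (hS _ ha) (hS _ hb) (hS _ hc) hap
  have := hdist _ ha _ hc hac
    (eq_zero_iff_of_add_eq_two_nsmul (hS _ ha) (hS _ hb) (hS _ hc) hap)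
  have := hnorm _ hb
  omega

end ProgressionFree

section SignVector

def signOfBit (b : ZMod 2) : ZMod 4 :=
  if b = 0 then 1 else -1

lemma signOfBit_injective : Injective signOfBit := by decide

lemma signOfBit_ne_zero (b : ZMod 2) : signOfBit b ≠ 0 := by revert b; decide

lemma signOfBit_ne_two (b : ZMod 2) : signOfBit b ≠ 2 := by revert b; decide

lemma hammingDist_extend_zero {α κ β : Type*} [Fintype α] [Fintype κ] [DecidableEq β] [Zero β]
    {f : α → κ} (hf : Injective f) (g g' : α → β) :
    hammingDist (extend f g 0) (extend f g' 0) = hammingDist g g' := by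
  classical
  rw [hammingDist, hammingDist, ← card_image_of_injective _ hf]
  congr 1
  ext j
  simp only [mem_filter, mem_univ, true_and, mem_image]
  by_cases hj : ∃ a, f a = j
  · obtain ⟨a, rfl⟩ := hj
    simp only [hf.extend_apply, hf.eq_iff, exists_eq_right]
  · simp only [extend_apply' _ _ _ hj, ne_eq, not_true_eq_false, false_iff]
    exact fun ⟨a, _, ha⟩ => hj ⟨a, ha⟩

variable {n : ℕ} (A : Finset (Fin n)) (w : Fin A.card → ZMod 2)

noncomputable def signVector : Fin n → ZMod 4 :=
  extend (A.orderEmbOfFin rfl) (signOfBit ∘ w) 0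

lemma signVector_of_notMem {j : Fin n} (hj : j ∉ A) : signVector A w j = 0 :=
  extend_apply' _ _ _ fun ⟨k, hk⟩ => hj (hk ▸ A.orderEmbOfFin_mem rfl k)

lemma signVector_orderEmbOfFin (k : Fin A.card) :
    signVector A w (A.orderEmbOfFin rfl k) = signOfBit (w k) :=
  (A.orderEmbOfFin rfl).injective.extend_apply _ _ k

lemma exists_orderEmbOfFin_eq {j : Fin n} (hj : j ∈ A) : ∃ k, A.orderEmbOfFin rfl k = j := by
  rwa [← Set.mem_range, range_orderEmbOfFin]

lemma signVector_eq_zero_iff (j : Fin n) : signVector A w j = 0 ↔ j ∉ A := by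
  by_cases hj : j ∈ A
  · obtain ⟨k, rfl⟩ := exists_orderEmbOfFin_eq A hj
    simp [signVector_orderEmbOfFin, signOfBit_ne_zero, hj]
  · simp [signVector_of_notMem A w hj, hj]

lemma signVector_ne_two (j : Fin n) : signVector A w j ≠ 2 := by
  by_cases hj : j ∈ A
  · obtain ⟨k, rfl⟩ := exists_orderEmbOfFin_eq A hj
    rw [signVector_orderEmbOfFin]
    exact signOfBit_ne_two _
  · rw [signVector_of_notMem A w hj]
    decide

lemma hammingNorm_signVector : hammingNorm (signVector A w) = A.card := by
  rw [hammingNorm]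
  congr 1
  ext j
  simp [signVector_eq_zero_iff]

lemma hammingDist_signVector (v : Fin A.card → ZMod 2) :
    hammingDist (signVector A w) (signVector A v) = hammingDist w v := by
  rw [signVector, signVector, hammingDist_extend_zero (A.orderEmbOfFin rfl).injective]
  exact hammingDist_comp (fun _ => signOfBit) fun _ => signOfBit_injective

lemma signVector_injective : Injective (signVector A) := fun w v h => by
  rw [← hammingDist_eq_zero, ← hammingDist_signVector, h, hammingDist_self]

lemma eq_of_signVector_eq {B : Finset (Fin n)} {v : Fin B.card → ZMod 2}
    (h : ∀ j, signVector A w j = 0 ↔ signVector B v j = 0) : A = B := by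
  ext j
  simpa [signVector_eq_zero_iff] using (h j).not

end SignVector

lemma exists_code_card_eq_maxCode (i d : ℕ) :
    ∃ T : Finset (Fin i → ZMod 2),
      (∀ x ∈ T, ∀ y ∈ T, x ≠ y → d ≤ hammingDist x y) ∧ T.card = maxCode i d :=
  Nat.sSup_mem (s := {c | ∃ T : Finset (Fin i → ZMod 2),
      (∀ x ∈ T, ∀ y ∈ T, x ≠ y → d ≤ hammingDist x y) ∧ T.card = c})
    ⟨0, ∅, by simp, rfl⟩ ⟨Fintype.card (Fin i → ZMod 2), fun _ ⟨T, _, hT⟩ => hT ▸ card_le_univ T⟩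

lemma card_le_rAP {m k n : ℕ} [NeZero m] {S : Finset (Fin n → ZMod m)} (hS : ProgFree m k S) :
    S.card ≤ rAP k m n :=
  le_csSup ⟨Fintype.card (Fin n → ZMod m), fun _ ⟨S, _, hS⟩ => hS ▸ card_le_univ S⟩ ⟨S, hS, rfl⟩

lemma sum_card_lt_eq_sum_choose {M : Type*} [AddCommMonoid M] (n t : ℕ) (g : ℕ → M) :
    ∑ A ∈ univ.filter (fun A : Finset (Fin n) => t < A.card), g A.card =
      ∑ i ∈ Icc (t + 1) n, n.choose i • g i := by
  rw [sum_filter, ← powerset_univ, sum_powerset_apply_card (fun i => if t < i then g i else 0),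
    card_univ, Fintype.card_fin]
  simp only [smul_ite, smul_zero]
  rw [← sum_filter]
  congr 1
  ext i
  simp only [mem_filter, mem_range, mem_Icc]
  omega

noncomputable def signCodeUnion (n t : ℕ) (T : ∀ i, Finset (Fin i → ZMod 2)) :
    Finset (Fin n → ZMod 4) :=
  (univ.filter fun A : Finset (Fin n) => t < A.card).biUnion
    fun A => (T A.card).image (signVector A)

section SignCodeUnion

variable {n t : ℕ} {T : ∀ i, Finset (Fin i → ZMod 2)}

lemma mem_signCodeUnion {x : Fin n → ZMod 4} :
    x ∈ signCodeUnion n t T ↔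
      ∃ A : Finset (Fin n), t < A.card ∧ ∃ w ∈ T A.card, signVector A w = x := by
  simp [signCodeUnion]

lemma progFree_signCodeUnion (hT : ∀ i, ∀ x ∈ T i, ∀ y ∈ T i, x ≠ y → i - t ≤ hammingDist x y) :
    ProgFree 4 3 (signCodeUnion n t T) := by
  refine progFree_three_four_of_hammingNorm_le (t := t) ?_ ?_ ?_
  · intro x hx
    obtain ⟨A, -, w, -, rfl⟩ := mem_signCodeUnion.1 hx
    exact signVector_ne_two A w
  · intro x hx
    obtain ⟨A, hA, w, -, rfl⟩ := mem_signCodeUnion.1 hx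
    rwa [hammingNorm_signVector]
  · intro x hx z hz hxz hsupp
    obtain ⟨A, -, w, hw, rfl⟩ := mem_signCodeUnion.1 hx
    obtain ⟨B, -, v, hv, rfl⟩ := mem_signCodeUnion.1 hz
    obtain rfl := eq_of_signVector_eq A w hsupp
    rw [hammingNorm_signVector, hammingDist_signVector]
    have := hT _ w hw v hv (fun h => hxz (h ▸ rfl))
    omega

lemma card_signCodeUnion :
    (signCodeUnion n t T).card = ∑ i ∈ Icc (t + 1) n, n.choose i * (T i).card := by
  rw [signCodeUnion, card_biUnion]
  · simp only [card_image_of_injective _ (signVector_injective _)]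
    exact sum_card_lt_eq_sum_choose n t (fun i => (T i).card)
  · intro A _ B _ hAB
    refine disjoint_left.2 fun x hxA hxB => hAB ?_
    obtain ⟨w, -, rfl⟩ := mem_image.1 hxA
    obtain ⟨v, -, hv⟩ := mem_image.1 hxB
    exact eq_of_signVector_eq A w fun j => by rw [hv]

end SignCodeUnion

theorem sum_choose_mul_maxCode_le_rAP (n t : ℕ) :
    ∑ i ∈ Icc (t + 1) n, n.choose i * maxCode i (i - t) ≤ rAP 3 4 n := by
  choose T hT hTcard using fun i => exists_code_card_eq_maxCode i (i - t)
  calc ∑ i ∈ Icc (t + 1) n, n.choose i * maxCode i (i - t)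
      = (signCodeUnion n t T).card := by
        rw [card_signCodeUnion]; simp only [hTcard]
    _ ≤ rAP 3 4 n := card_le_rAP (progFree_signCodeUnion hT)

theorem stmt1_general (n : ℕ) :
    (∀ t : ℕ, t ≤ n →
      ∑ i ∈ Finset.Icc (t + 1) n, n.choose i * maxCode i (i - t) ≤ rAP 3 4 n) ∧
    (Finset.Icc 0 n).sup
        (fun t => ∑ i ∈ Finset.Icc (t + 1) n, n.choose i * maxCode i (i - t))
      ≤ rAP 3 4 n :=
  ⟨fun t _ => sum_choose_mul_maxCode_le_rAP n t,
    Finset.sup_le fun t _ => sum_choose_mul_maxCode_le_rAP n t⟩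

theorem stmt1 (n : ℕ) (hn : 1 < n) :
    (∀ t : ℕ, t ≤ n →
      ∑ i ∈ Finset.Icc (t + 1) n, n.choose i * maxCode i (i - t) ≤ rAP 3 4 n) ∧
    (Finset.Icc 0 n).sup
        (fun t => ∑ i ∈ Finset.Icc (t + 1) n, n.choose i * maxCode i (i - t))
      ≤ rAP 3 4 n :=
  stmt1_general n
end

section
/- Let n ≥ 1 and let S ⊆ (ℤ/4ℤ)^n be the set of all vectors whose coordinates all lie in {0, 1, 2} and which have exactly ⌊n/3⌋ coordinates equal to 1. Then S contains no proper 3-term arithmetic progression in (ℤ/4ℤ)^n, and |S| = C(n, ⌊n/3⌋) · 2^{n − ⌊n/3⌋}, where C(n,i) is the binomial coefficient. -/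
/-!
In `{0, 1, 2} ⊆ ℤ/4ℤ` the only 3-term progressions are the constant ones, `0, 1, 2`, `2, 1, 0`,
`0, 2, 0` and `2, 0, 2`. So along a progression `x, x + d, x + 2d` of such vectors, every
coordinate equal to `1` in `x` is still `1` in `x + d`. If both have the same number of `1`s,
the `1`-coordinates agree, which rules out steps `±1` and leaves `d ∈ {0, 2}ⁿ`, i.e.
`x + 2d = x`. For the count, choose the `1`-coordinates; every other coordinate is `0` or `2`.
-/

open Finset

namespace ZMod4

abbrev IsTernary (a : ZMod 4) : Prop := a = 0 ∨ a = 1 ∨ a = 2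

theorem add_eq_one_of_eq_one {a b : ZMod 4} (h₀ : IsTernary a) (h₁ : IsTernary (a + b))
    (h₂ : IsTernary (a + 2 • b)) (ha : a = 1) : a + b = 1 := by
  subst ha; revert b; decide

theorem two_nsmul_eq_zero_of_add_eq_one_imp {a b : ZMod 4} (h₀ : IsTernary a)
    (h₁ : IsTernary (a + b)) (h₂ : IsTernary (a + 2 • b)) (h : a + b = 1 → a = 1) :
    2 • b = 0 := by
  revert a b; decide

end ZMod4

open ZMod4

variable {n : ℕ}

def ones (v : Fin n → ZMod 4) : Finset (Fin n) := univ.filter fun i => v i = 1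

def ternarySlice (n w : ℕ) : Finset (Fin n → ZMod 4) :=
  univ.filter fun v => (∀ i, IsTernary (v i)) ∧ (ones v).card = w

@[simp]
theorem mem_ones {v : Fin n → ZMod 4} {i : Fin n} : i ∈ ones v ↔ v i = 1 := by
  simp [ones]

theorem mem_ternarySlice {w : ℕ} {v : Fin n → ZMod 4} :
    v ∈ ternarySlice n w ↔ (∀ i, IsTernary (v i)) ∧ (ones v).card = w := by
  simp [ternarySlice]

theorem two_nsmul_eq_zero_of_mem_ternarySlice {w : ℕ} {x d : Fin n → ZMod 4}
    (h₀ : x ∈ ternarySlice n w) (h₁ : x + d ∈ ternarySlice n w)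
    (h₂ : x + 2 • d ∈ ternarySlice n w) : 2 • d = 0 := by
  rw [mem_ternarySlice] at h₀ h₁ h₂
  have hsub : ones x ⊆ ones (x + d) := fun i hi ↦ by
    rw [mem_ones] at hi ⊢
    exact add_eq_one_of_eq_one (h₀.1 i) (h₁.1 i) (h₂.1 i) hi
  have hones : ones x = ones (x + d) := eq_of_subset_of_card_le hsub (by rw [h₀.2, h₁.2])
  funext i
  refine two_nsmul_eq_zero_of_add_eq_one_imp (h₀.1 i) (h₁.1 i) (h₂.1 i) fun h ↦ ?_
  rw [← mem_ones, hones, mem_ones]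
  exact h

theorem progFree_ternarySlice (n w : ℕ) : ProgFree 4 3 (ternarySlice n w) := by
  rintro ⟨x, d, hinj, hmem⟩
  have hd : 2 • d = 0 := two_nsmul_eq_zero_of_mem_ternarySlice
    (by simpa using hmem 0) (by simpa using hmem 1) (by simpa using hmem 2)
  have : (0 : Fin 3) = 2 := hinj (by simp [hd])
  exact absurd this (by decide)

def ternaryBox (A : Finset (Fin n)) : Finset (Fin n → ZMod 4) :=
  Fintype.piFinset fun i ↦ if i ∈ A then {1} else {0, 2}

theorem mem_ternaryBox {A : Finset (Fin n)} {v : Fin n → ZMod 4} :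
    v ∈ ternaryBox A ↔ (∀ i, IsTernary (v i)) ∧ ones v = A := by
  have hcoord (i : Fin n) : v i ∈ (if i ∈ A then {1} else {0, 2} : Finset (ZMod 4)) ↔
      IsTernary (v i) ∧ (v i = 1 ↔ i ∈ A) := by
    split_ifs with hi <;> generalize v i = a <;> revert a <;> simp [hi] <;> decide
  simp only [ternaryBox, Fintype.mem_piFinset, hcoord, forall_and, Finset.ext_iff, mem_ones]

theorem card_ternaryBox (A : Finset (Fin n)) : (ternaryBox A).card = 2 ^ (n - A.card) := by
  have hcoord (i : Fin n) : (if i ∈ A then {1} else {0, 2} : Finset (ZMod 4)).card =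
      if i ∈ Aᶜ then 2 else 1 := by
    by_cases hi : i ∈ A <;> simp [hi]; decide
  rw [ternaryBox, Fintype.card_piFinset]
  simp only [hcoord, prod_ite_mem, univ_inter, prod_const, card_compl, Fintype.card_fin]

theorem filter_ones_eq_ternaryBox {w : ℕ} {A : Finset (Fin n)} (hA : A.card = w) :
    {v ∈ ternarySlice n w | ones v = A} = ternaryBox A := by
  ext v
  rw [mem_filter, mem_ternarySlice, mem_ternaryBox]
  constructor
  · exact fun ⟨⟨hv, _⟩, hones⟩ ↦ ⟨hv, hones⟩
  · exact fun ⟨hv, hones⟩ ↦ ⟨⟨hv, hones ▸ hA⟩, hones⟩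

theorem card_ternarySlice (n w : ℕ) :
    (ternarySlice n w).card = n.choose w * 2 ^ (n - w) := by
  calc (ternarySlice n w).card
      = ∑ A ∈ powersetCard w univ, {v ∈ ternarySlice n w | ones v = A}.card :=
        card_eq_sum_card_fiberwise fun v hv ↦ by
          simpa using (mem_ternarySlice.mp hv).2
    _ = ∑ A ∈ powersetCard w univ, 2 ^ (n - w) := sum_congr rfl fun A hA ↦ by
        rw [filter_ones_eq_ternaryBox (mem_powersetCard.mp hA).2, card_ternaryBox,
          (mem_powersetCard.mp hA).2]
    _ = n.choose w * 2 ^ (n - w) := by simp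

theorem stmt15_general (n : ℕ)
    (S : Finset (Fin n → ZMod 4))
    (hS : S = Finset.univ.filter (fun v : Fin n → ZMod 4 =>
      (∀ i, v i = 0 ∨ v i = 1 ∨ v i = 2) ∧
      (Finset.univ.filter fun i => v i = 1).card = n / 3)) :
    ProgFree 4 3 S ∧ S.card = n.choose (n / 3) * 2 ^ (n - n / 3) := by
  subst hS
  exact ⟨progFree_ternarySlice n (n / 3), card_ternarySlice n (n / 3)⟩

theorem stmt15 (n : ℕ) (hn : 1 ≤ n)
    (S : Finset (Fin n → ZMod 4))
    (hS : S = Finset.univ.filter (fun v : Fin n → ZMod 4 =>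
      (∀ i, v i = 0 ∨ v i = 1 ∨ v i = 2) ∧
      (Finset.univ.filter fun i => v i = 1).card = n / 3)) :
    ProgFree 4 3 S ∧ S.card = n.choose (n / 3) * 2 ^ (n - n / 3) :=
  stmt15_general n S hS
end

section
/- For every n ≥ 1, r_3(ℤ_4^n) equals the maximal possible value of ∑_{x ∈ 𝔽_2^n} |A(x)| over all systems of finite subsets A(x) ⊆ 𝔽_2^n (one subset for each x ∈ 𝔽_2^n) satisfying property (*). -/
/-- Property `(*)`: if `y ∈ x + A(x) +̂ A(x)` (restricted sumset), then `A(y) = ∅`. -/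
def PropertyStar {n : ℕ} (A : (Fin n → ZMod 2) → Finset (Fin n → ZMod 2)) : Prop :=
  ∀ x y : Fin n → ZMod 2,
    (∃ a ∈ A x, ∃ a' ∈ A x, a ≠ a' ∧ y = x + a + a') → A y = ∅

/-!
Write each `z ∈ (ℤ/4ℤ)^n` uniquely as `x + 2a` with `x, a ∈ {0,1}^n`, and let `A(x)` be the set
of `a` with `x + 2a ∈ S`. Since `2(y + 2b) = 2y` in `ℤ/4ℤ`, the relation `z + z'' = 2z'` for
`z = x + 2a`, `z' = y + 2b`, `z'' = x'' + 2a''` says exactly `x'' = x` and `y = x + a + a''`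
(the sum of the low digits must be even). Hence `S` contains a proper 3-term progression iff
some `A(x)` contains `a ≠ a''` with `A(x + a + a'')` nonempty, and `|S| = ∑ₓ |A(x)|`.
-/

open Finset

lemma injective_fin_three_ap_iff {G : Type*} [AddCommGroup G] (p d : G) :
    Function.Injective (fun i : Fin 3 => p + (i : ℕ) • d) ↔ 2 • d ≠ 0 := by
  constructor
  · intro hinj h2d
    exact absurd (@hinj 0 2 (by simp [h2d])) (by decide)
  · intro h2d
    have hd : d ≠ 0 := by rintro rfl; simp at h2d
    intro i j h
    fin_cases i <;> fin_cases j <;> simp_all [two_nsmul, eq_comm (a := d)]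

lemma progFree_three_iff {m n : ℕ} (S : Finset (Fin n → ZMod m)) :
    ProgFree m 3 S ↔ ∀ z ∈ S, ∀ z' ∈ S, ∀ z'' ∈ S, z + z'' = 2 • z' → z = z'' := by
  simp only [ProgFree, injective_fin_three_ap_iff, not_exists, not_and]
  constructor
  · intro h z hz z' hz' z'' hz'' hsum
    by_contra hne
    have h2 : 2 • (z' - z) = z'' - z := by rw [smul_sub, ← hsum]; abel
    refine h z (z' - z) (by rwa [h2, sub_ne_zero, ne_comm]) fun i => ?_
    fin_cases i
    · simpa using hz
    · simpa using hz'
    · simpa only [Fin.reduceFinMk, Fin.val_two, h2, add_sub_cancel] using hz''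
  · intro h p d h2d hmem
    have hsum : p + (p + 2 • d) = 2 • (p + d) := by rw [smul_add]; abel
    refine h2d (add_left_cancel (a := p) ?_)
    rw [add_zero, ← h p (by simpa using hmem 0) (p + d) (by simpa using hmem 1) _
      (by simpa only [Fin.reduceFinMk, Fin.val_two] using hmem 2) hsum]

section Fibres

variable {α β γ : Type*} [Fintype β] [DecidableEq γ]

def fibres (e : α × β ≃ γ) (S : Finset γ) (x : α) : Finset β :=
  univ.filter fun b => e (x, b) ∈ S

lemma mem_fibres {e : α × β ≃ γ} {S : Finset γ} {x : α} {b : β} :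
    b ∈ fibres e S x ↔ e (x, b) ∈ S := by
  simp [fibres]

lemma sum_card_fibres [Fintype α] [Fintype γ] (e : α × β ≃ γ) (S : Finset γ) :
    ∑ x, (fibres e S x).card = S.card := by
  simp only [fibres, card_filter]
  rw [← Fintype.sum_prod_type (fun p => if e p ∈ S then 1 else 0),
    e.sum_comp (fun c => if c ∈ S then 1 else 0), ← card_filter]
  simp

lemma fibres_surjective [Fintype γ] [DecidableEq β] (e : α × β ≃ γ) :
    Function.Surjective (fibres e) :=
  fun A => ⟨univ.filter fun c => (e.symm c).2 ∈ A (e.symm c).1, by ext x b; simp [mem_fibres]⟩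

end Fibres

def digit (x a : ZMod 2) : ZMod 4 := x.val + 2 * a.val

lemma digit_bijective : Function.Bijective (Function.uncurry digit) := by decide

lemma digit_add_digit_eq_two_nsmul_iff (x a x'' a'' y b : ZMod 2) :
    digit x a + digit x'' a'' = 2 • digit y b ↔ x'' = x ∧ y = x + a + a'' := by
  revert x a x'' a'' y b
  decide

noncomputable def digitEquiv (n : ℕ) : (Fin n → ZMod 2) × (Fin n → ZMod 2) ≃ (Fin n → ZMod 4) :=
  (Equiv.arrowProdEquivProdArrow _ _ _).symm.trans
    (Equiv.piCongrRight fun _ => Equiv.ofBijective _ digit_bijective)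

lemma digitEquiv_apply {n : ℕ} (x a : Fin n → ZMod 2) (i : Fin n) :
    digitEquiv n (x, a) i = digit (x i) (a i) :=
  rfl

lemma digitEquiv_add_eq_two_nsmul_iff {n : ℕ} (x a x'' a'' y b : Fin n → ZMod 2) :
    digitEquiv n (x, a) + digitEquiv n (x'', a'') = 2 • digitEquiv n (y, b) ↔
      x'' = x ∧ y = x + a + a'' := by
  simp only [funext_iff, Pi.add_apply, Pi.smul_apply, digitEquiv_apply,
    digit_add_digit_eq_two_nsmul_iff, forall_and]

theorem progFree_three_iff_propertyStar {n : ℕ} (S : Finset (Fin n → ZMod 4)) :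
    ProgFree 4 3 S ↔ PropertyStar (fibres (digitEquiv n) S) := by
  rw [progFree_three_iff]
  constructor
  · rintro h x _ ⟨a, ha, a'', ha'', hne, rfl⟩
    refine eq_empty_iff_forall_notMem.mpr fun b hb => hne ?_
    have hsum := (digitEquiv_add_eq_two_nsmul_iff x a x a'' _ b).mpr ⟨rfl, rfl⟩
    simpa using h _ (mem_fibres.mp ha) _ (mem_fibres.mp hb) _ (mem_fibres.mp ha'') hsum
  · intro h
    simp only [(digitEquiv n).surjective.forall, Prod.forall]
    intro x a ha y b hb x'' a'' ha'' hsum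
    obtain ⟨rfl, rfl⟩ := (digitEquiv_add_eq_two_nsmul_iff x a x'' a'' y b).mp hsum
    by_contra hne
    have hempty := h _ _ ⟨a, mem_fibres.mpr ha, a'', mem_fibres.mpr ha'',
      fun haa => hne (haa ▸ rfl), rfl⟩
    exact notMem_empty b (hempty ▸ mem_fibres.mpr hb)

theorem stmt16_general (n : ℕ) :
    rAP 3 4 n =
      sSup {c : ℕ | ∃ A : (Fin n → ZMod 2) → Finset (Fin n → ZMod 2),
        PropertyStar A ∧ ∑ x : Fin n → ZMod 2, (A x).card = c} := by
  unfold rAP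
  congr 1
  ext c
  constructor
  · rintro ⟨S, hS, rfl⟩
    exact ⟨_, (progFree_three_iff_propertyStar S).mp hS, sum_card_fibres _ S⟩
  · rintro ⟨A, hA, rfl⟩
    obtain ⟨S, rfl⟩ := fibres_surjective (digitEquiv n) A
    exact ⟨S, (progFree_three_iff_propertyStar S).mpr hA, (sum_card_fibres _ S).symm⟩

theorem stmt16 (n : ℕ) (hn : 1 ≤ n) :
    rAP 3 4 n =
      sSup {c : ℕ | ∃ A : (Fin n → ZMod 2) → Finset (Fin n → ZMod 2),
        PropertyStar A ∧ ∑ x : Fin n → ZMod 2, (A x).card = c} :=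
  stmt16_general n
end

section
/- For every n ≥ 1, r_4(ℤ_4^n) equals the maximal possible value of ∑_{x ∈ 𝔽_2^n} |A(x)| over all systems of finite subsets A(x) ⊆ 𝔽_2^n (one subset for each x ∈ 𝔽_2^n) satisfying property (**). -/
/-- Property `(**)`: if `x + y ∈ (A(x) + A(x)) ∩ (A(y) + A(y))`, then `x = y`. -/
def PropertyStarStar {n : ℕ}
    (A : (Fin n → ZMod 2) → Finset (Fin n → ZMod 2)) : Prop :=
  ∀ x y : Fin n → ZMod 2,
    ((∃ a ∈ A x, ∃ a' ∈ A x, x + y = a + a') ∧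
      (∃ b ∈ A y, ∃ b' ∈ A y, x + y = b + b')) → x = y

/-!
Write `z ∈ ℤ/4` as `u + 2s` with bits `u, s ∈ 𝔽₂`; coordinatewise this identifies `(ℤ/4)ⁿ` with
pairs `(x, a)` of vectors in `𝔽₂ⁿ`, so a set `S ⊆ (ℤ/4)ⁿ` is the same as the system of fibres
`A(x) = {a | (x, a) ∈ S}`, and `|S| = ∑ₓ |A(x)|`. Adding `2w` keeps the low bits and adds the low
bits of `w` to the high bits. Hence a progression `p, p + d, p + 2d, p + 3d` with `p = (x, a)` and
`p + d = (y, b)` reads `(x, a), (y, b), (x, a + x + y), (y, b + x + y)`, and it is proper exactly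
when `2d ≠ 0`, i.e. when `x ≠ y`. Such a configuration is precisely a violation of `(**)`.
-/

open Finset

theorem injective_add_nsmul_fin_four_iff {G : Type*} [AddLeftCancelMonoid G] {d : G}
    (hd : 4 • d = 0) (x : G) :
    Function.Injective (fun i : Fin 4 => x + (i : ℕ) • d) ↔ 2 • d ≠ 0 := by
  constructor
  · intro hinj h2
    have : x + ((0 : Fin 4) : ℕ) • d = x + ((2 : Fin 4) : ℕ) • d := by simp [h2]
    exact absurd (hinj this) (by decide)
  · intro h2 i j hij
    have hord : addOrderOf d = 4 := addOrderOf_eq_prime_pow (p := 2) (n := 1) h2 hd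
    have hmod := nsmul_eq_nsmul_iff_modEq.1 (add_left_cancel hij)
    rw [hord] at hmod
    exact Fin.ext (hmod.eq_of_lt_of_lt i.isLt j.isLt)

theorem forall_fin_four_add_nsmul_iff {G : Type*} [AddCommMonoid G] (P : G → Prop) (x d : G) :
    (∀ i : Fin 4, P (x + (i : ℕ) • d)) ↔
      P x ∧ P (x + d) ∧ P (x + 2 • d) ∧ P (x + d + 2 • d) := by
  simp only [Fin.forall_fin_succ, IsEmpty.forall_iff, and_true]
  simp [add_assoc, ← succ_nsmul']

namespace ZMod4

def lowBit (z : ZMod 4) : ZMod 2 := z.val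

def highBit (z : ZMod 4) : ZMod 2 := (z.val / 2 : ℕ)

def ofBits (u s : ZMod 2) : ZMod 4 := (u.val + 2 * s.val : ℕ)

theorem lowBit_ofBits : ∀ u s, lowBit (ofBits u s) = u := by decide

theorem highBit_ofBits : ∀ u s, highBit (ofBits u s) = s := by decide

theorem ofBits_lowBit_highBit : ∀ z, ofBits (lowBit z) (highBit z) = z := by decide

theorem lowBit_add : ∀ z w, lowBit (z + w) = lowBit z + lowBit w := by decide

theorem lowBit_add_two_nsmul : ∀ z w : ZMod 4, lowBit (z + 2 • w) = lowBit z := by decide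

theorem highBit_add_two_nsmul :
    ∀ z w : ZMod 4, highBit (z + 2 • w) = highBit z + lowBit w := by decide

theorem two_nsmul_eq_zero_iff : ∀ z : ZMod 4, 2 • z = 0 ↔ lowBit z = 0 := by decide

end ZMod4

section Bits

variable {ι : Type*}

def lowBits (z : ι → ZMod 4) : ι → ZMod 2 := fun i => ZMod4.lowBit (z i)

def highBits (z : ι → ZMod 4) : ι → ZMod 2 := fun i => ZMod4.highBit (z i)

def joinBits (x a : ι → ZMod 2) : ι → ZMod 4 := fun i => ZMod4.ofBits (x i) (a i)

@[simp]
theorem lowBits_joinBits (x a : ι → ZMod 2) : lowBits (joinBits x a) = x :=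
  funext fun i => ZMod4.lowBit_ofBits (x i) (a i)

@[simp]
theorem highBits_joinBits (x a : ι → ZMod 2) : highBits (joinBits x a) = a :=
  funext fun i => ZMod4.highBit_ofBits (x i) (a i)

@[simp]
theorem joinBits_lowBits_highBits (z : ι → ZMod 4) : joinBits (lowBits z) (highBits z) = z :=
  funext fun i => ZMod4.ofBits_lowBit_highBit (z i)

theorem joinBits_inj {x a y b : ι → ZMod 2} : joinBits x a = joinBits y b ↔ x = y ∧ a = b := by
  refine ⟨fun h => ⟨?_, ?_⟩, fun ⟨hx, ha⟩ => hx ▸ ha ▸ rfl⟩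
  · simpa using congrArg lowBits h
  · simpa using congrArg highBits h

theorem lowBits_add (z w : ι → ZMod 4) : lowBits (z + w) = lowBits z + lowBits w :=
  funext fun i => ZMod4.lowBit_add (z i) (w i)

theorem lowBits_eq_add_lowBits_add (z w : ι → ZMod 4) :
    lowBits w = lowBits z + lowBits (z + w) := by
  rw [lowBits_add, ← add_assoc, ZModModule.add_self, zero_add]

@[simp]
theorem lowBits_add_two_nsmul (z w : ι → ZMod 4) : lowBits (z + 2 • w) = lowBits z :=
  funext fun i => ZMod4.lowBit_add_two_nsmul (z i) (w i)

@[simp]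
theorem highBits_add_two_nsmul (z w : ι → ZMod 4) :
    highBits (z + 2 • w) = highBits z + lowBits w :=
  funext fun i => ZMod4.highBit_add_two_nsmul (z i) (w i)

theorem add_two_nsmul_eq_joinBits (z w : ι → ZMod 4) :
    z + 2 • w = joinBits (lowBits z) (highBits z + lowBits w) := by
  rw [← lowBits_add_two_nsmul z w, ← highBits_add_two_nsmul, joinBits_lowBits_highBits]

theorem two_nsmul_eq_zero_iff_lowBits (w : ι → ZMod 4) : 2 • w = 0 ↔ lowBits w = 0 := by
  simp only [funext_iff]
  exact forall_congr' fun i => ZMod4.two_nsmul_eq_zero_iff (w i)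

end Bits

section Fibers

variable {ι : Type*} [Fintype ι] [DecidableEq ι]

def fibers (S : Finset (ι → ZMod 4)) (x : ι → ZMod 2) : Finset (ι → ZMod 2) :=
  {a | joinBits x a ∈ S}

def ofFibers (A : (ι → ZMod 2) → Finset (ι → ZMod 2)) : Finset (ι → ZMod 4) :=
  (univ.sigma A).image fun p => joinBits p.1 p.2

@[simp]
theorem mem_fibers {S : Finset (ι → ZMod 4)} {x a : ι → ZMod 2} :
    a ∈ fibers S x ↔ joinBits x a ∈ S := by
  simp [fibers]

@[simp]
theorem mem_ofFibers {A : (ι → ZMod 2) → Finset (ι → ZMod 2)} {z : ι → ZMod 4} :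
    z ∈ ofFibers A ↔ highBits z ∈ A (lowBits z) := by
  simp only [ofFibers, mem_image, mem_sigma, mem_univ, true_and, Sigma.exists]
  constructor
  · rintro ⟨x, a, ha, rfl⟩
    simpa using ha
  · exact fun h => ⟨_, _, h, joinBits_lowBits_highBits z⟩

theorem card_ofFibers (A : (ι → ZMod 2) → Finset (ι → ZMod 2)) :
    #(ofFibers A) = ∑ x, #(A x) := by
  rw [ofFibers, card_image_of_injective, card_sigma]
  rintro ⟨x, a⟩ ⟨y, b⟩ h
  obtain ⟨rfl, rfl⟩ := joinBits_inj.1 h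
  rfl

theorem ofFibers_fibers (S : Finset (ι → ZMod 4)) : ofFibers (fibers S) = S := by
  ext z
  simp

end Fibers

section Correspondence

variable {n : ℕ}

theorem propertyStarStar_fibers {S : Finset (Fin n → ZMod 4)} (hS : ProgFree 4 4 S) :
    PropertyStarStar (fibers S) := by
  rintro x y ⟨⟨a, ha, a', ha', hxa⟩, ⟨b, hb, b', hb', hyb⟩⟩
  rw [mem_fibers] at ha ha' hb hb'
  by_contra hxy
  set p := joinBits x a
  set d := joinBits y b - p
  have hpd : p + d = joinBits y b := add_sub_cancel p _
  have hd : lowBits d = x + y := by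
    rw [lowBits_eq_add_lowBits_add p d, hpd, lowBits_joinBits, lowBits_joinBits]
  refine hS ⟨p, d, ?_, ?_⟩
  · rw [injective_add_nsmul_fin_four_iff (ZModModule.char_nsmul_eq_zero 4 d),
      Ne, two_nsmul_eq_zero_iff_lowBits, hd, add_eq_zero_iff_eq_neg, ZModModule.neg_eq_self]
    exact hxy
  · refine (forall_fin_four_add_nsmul_iff (· ∈ S) p d).2 ⟨ha, hpd ▸ hb, ?_, ?_⟩
    · rwa [add_two_nsmul_eq_joinBits, lowBits_joinBits, highBits_joinBits, hd, hxa,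
        ← add_assoc, ZModModule.add_self, zero_add]
    · rwa [hpd, add_two_nsmul_eq_joinBits, lowBits_joinBits, highBits_joinBits, hd, hyb,
        ← add_assoc, ZModModule.add_self, zero_add]

theorem progFree_ofFibers {A : (Fin n → ZMod 2) → Finset (Fin n → ZMod 2)}
    (hA : PropertyStarStar A) : ProgFree 4 4 (ofFibers A) := by
  rintro ⟨p, d, hinj, hmem⟩
  obtain ⟨h0, h1, h2, h3⟩ := (forall_fin_four_add_nsmul_iff (· ∈ ofFibers A) p d).1 hmem
  simp only [mem_ofFibers, lowBits_add_two_nsmul, highBits_add_two_nsmul] at h0 h1 h2 h3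
  have hd := lowBits_eq_add_lowBits_add p d
  have hsum (z : Fin n → ZMod 4) :
      lowBits p + lowBits (p + d) = highBits z + (highBits z + lowBits d) := by
    rw [← add_assoc, ZModModule.add_self, zero_add, hd]
  have hxy := hA _ _ ⟨⟨_, h0, _, h2, hsum p⟩, ⟨_, h1, _, h3, hsum (p + d)⟩⟩
  refine (injective_add_nsmul_fin_four_iff (ZModModule.char_nsmul_eq_zero 4 d) p).1 hinj ?_
  rw [two_nsmul_eq_zero_iff_lowBits, hd, hxy, ZModModule.add_self]

end Correspondence

theorem stmt17_general (n : ℕ) :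
    rAP 4 4 n =
      sSup {c : ℕ | ∃ A : (Fin n → ZMod 2) → Finset (Fin n → ZMod 2),
        PropertyStarStar A ∧ ∑ x : Fin n → ZMod 2, (A x).card = c} := by
  have hsets : {c : ℕ | ∃ S : Finset (Fin n → ZMod 4), ProgFree 4 4 S ∧ S.card = c} =
      {c : ℕ | ∃ A : (Fin n → ZMod 2) → Finset (Fin n → ZMod 2),
        PropertyStarStar A ∧ ∑ x : Fin n → ZMod 2, (A x).card = c} := by
    ext c
    constructor
    · rintro ⟨S, hS, rfl⟩
      exact ⟨fibers S, propertyStarStar_fibers hS, by rw [← card_ofFibers, ofFibers_fibers]⟩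
    · rintro ⟨A, hA, rfl⟩
      exact ⟨ofFibers A, progFree_ofFibers hA, card_ofFibers A⟩
  rw [rAP, hsets]

theorem stmt17 (n : ℕ) (hn : 1 ≤ n) :
    rAP 4 4 n =
      sSup {c : ℕ | ∃ A : (Fin n → ZMod 2) → Finset (Fin n → ZMod 2),
        PropertyStarStar A ∧ ∑ x : Fin n → ZMod 2, (A x).card = c} :=
  stmt17_general n
end

section
/- Let n ≥ 1 and let A(x) ⊆ 𝔽_2^n (for x ∈ 𝔽_2^n) be a system of subsets satisfying property (*) such that every non-empty A(x) is a linear subspace of 𝔽_2^n. Then ∑_{x ∈ 𝔽_2^n} |A(x)| ≤ 3^n. -/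
/-!
For `x` with `A x` nonempty let `W x = A x`; property `(*)` (with `a = 0`, `a' = x + y`) forces
`x + y ∉ W x` for distinct such `x`, `y`. Hence the indicator functions of the cosets `x + W x`
restrict to the standard basis on these points and are linearly independent. Each of them is a
polynomial function of degree at most `codim W x`, so at most `∑_{k ≤ c} C(n, k)` points have
`codim W x ≤ c`, and Abel summation turns these counts into
`∑ |A x| = ∑ 2 ^ (n - codim W x) ≤ ∑_k C(n, k) 2 ^ (n - k) = 3 ^ n`.
-/

open Finset Module Submodule

theorem card_filter_le_eq_sum_card_filter_eq {α : Type*} (S : Finset α) (c : α → ℕ) (k : ℕ) :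
    #{x ∈ S | c x ≤ k} = ∑ j ∈ range (k + 1), #{x ∈ S | c x = j} := by
  simp [sum_card_fiberwise_eq_card_filter]

-- Abel summation: subtract the last weight from every weight and induct.
theorem sum_range_mul_le_of_partial_sums_le {m b w : ℕ → ℕ} (hw : Antitone w) {N : ℕ}
    (h : ∀ k ≤ N, ∑ i ∈ range (k + 1), m i ≤ ∑ i ∈ range (k + 1), b i) :
    ∑ i ∈ range (N + 1), m i * w i ≤ ∑ i ∈ range (N + 1), b i * w i := by
  induction N generalizing w with
  | zero => simpa using Nat.mul_le_mul_right (w 0) (by simpa using h 0 le_rfl)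
  | succ N ih =>
    have split : ∀ f : ℕ → ℕ, ∑ i ∈ range (N + 2), f i * w i =
        ∑ i ∈ range (N + 1), f i * (w i - w (N + 1)) + (∑ i ∈ range (N + 2), f i) * w (N + 1) := by
      intro f
      rw [sum_range_succ, sum_range_succ f, add_mul, sum_mul, ← add_assoc, ← sum_add_distrib]
      refine congrArg (· + _) (sum_congr rfl fun i hi => ?_)
      rw [← mul_add, Nat.sub_add_cancel (hw (by simp at hi; omega))]
    rw [split m, split b]
    exact add_le_add
      (ih (fun i j hij => Nat.sub_le_sub_right (hw hij) _) fun k hk => h k (by omega))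
      (Nat.mul_le_mul_right _ (h (N + 1) le_rfl))

theorem sum_two_pow_sub_le_three_pow {α : Type*} {S : Finset α} {c : α → ℕ} {n : ℕ}
    (hc : ∀ x ∈ S, c x ≤ n) (hS : ∀ k ≤ n, #{x ∈ S | c x ≤ k} ≤ ∑ j ∈ range (k + 1), n.choose j) :
    ∑ x ∈ S, 2 ^ (n - c x) ≤ 3 ^ n :=
  calc ∑ x ∈ S, 2 ^ (n - c x) = ∑ j ∈ range (n + 1), #{x ∈ S | c x = j} * 2 ^ (n - j) := by
        rw [← sum_fiberwise_of_maps_to' (t := range (n + 1)) (g := c)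
          (fun x hx => mem_range.mpr (Nat.lt_succ_of_le (hc x hx))) (fun j => 2 ^ (n - j))]
        simp
    _ ≤ ∑ j ∈ range (n + 1), n.choose j * 2 ^ (n - j) :=
        sum_range_mul_le_of_partial_sums_le (fun _ _ hij => Nat.pow_le_pow_right two_pos (by omega))
          fun k hk => card_filter_le_eq_sum_card_filter_eq S c k ▸ hS k hk
    _ = 3 ^ n := by
        rw [show 3 = 1 + 2 by rfl, add_pow]
        simp [mul_comm]

section LowDegree

variable {ι : Type*}

def monomialFn (T : Finset ι) : (ι → ZMod 2) → ZMod 2 := fun y => ∏ i ∈ T, y i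

def lowDegreeFns (c : ℕ) : Submodule (ZMod 2) ((ι → ZMod 2) → ZMod 2) :=
  span (ZMod 2) (Set.range fun T : {T : Finset ι // T.card ≤ c} => monomialFn T.1)

theorem monomialFn_mem_lowDegreeFns {T : Finset ι} {c : ℕ} (hT : T.card ≤ c) :
    monomialFn T ∈ lowDegreeFns c :=
  subset_span ⟨⟨T, hT⟩, rfl⟩

theorem lowDegreeFns_mono : Monotone (lowDegreeFns (ι := ι)) := fun _ _ hcd =>
  span_le.mpr <| Set.range_subset_iff.mpr fun T => monomialFn_mem_lowDegreeFns (T.2.trans hcd)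

theorem monomialFn_mul_monomialFn [DecidableEq ι] (T U : Finset ι) :
    monomialFn T * monomialFn U = monomialFn (T ∪ U) := by
  funext y
  have idem : ∀ a : ZMod 2, a * a = a := by decide
  rw [Pi.mul_apply, monomialFn, monomialFn, ← prod_union_inter,
    ← prod_sdiff (inter_subset_union (s := T) (t := U)), mul_assoc, idem,
    prod_sdiff inter_subset_union, monomialFn]

theorem lowDegreeFns_mul_le (c d : ℕ) :
    lowDegreeFns (ι := ι) c * lowDegreeFns d ≤ lowDegreeFns (c + d) := by
  classical
  rw [lowDegreeFns, lowDegreeFns, span_mul_span, span_le]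
  rintro _ ⟨_, ⟨T, rfl⟩, _, ⟨U, rfl⟩, rfl⟩
  show monomialFn T.1 * monomialFn U.1 ∈ _
  rw [monomialFn_mul_monomialFn]
  exact monomialFn_mem_lowDegreeFns ((card_union_le _ _).trans (add_le_add T.2 U.2))

theorem prod_mem_lowDegreeFns {κ : Type*} {s : Finset κ} {g : κ → (ι → ZMod 2) → ZMod 2}
    (hg : ∀ t ∈ s, g t ∈ lowDegreeFns 1) : ∏ t ∈ s, g t ∈ lowDegreeFns s.card := by
  classical
  induction s using Finset.induction_on with
  | empty => exact monomialFn_mem_lowDegreeFns (T := ∅) le_rfl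
  | insert a s ha ih =>
    rw [prod_insert ha, card_insert_of_notMem ha, add_comm]
    exact lowDegreeFns_mul_le 1 s.card <| mul_mem_mul (hg a (mem_insert_self a s))
      (ih fun t ht => hg t (mem_insert_of_mem ht))

theorem affine_mem_lowDegreeFns_one [Fintype ι] (a : ZMod 2)
    (φ : (ι → ZMod 2) →ₗ[ZMod 2] ZMod 2) : (fun y => a + φ y) ∈ lowDegreeFns 1 := by
  classical
  have h : (fun y => a + φ y) =
      a • monomialFn ∅ + ∑ i, φ (fun j => if i = j then 1 else 0) • monomialFn {i} := by
    funext y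
    simp [monomialFn, LinearMap.pi_apply_eq_sum_univ φ y, mul_comm]
  rw [h]
  exact add_mem (smul_mem _ _ (monomialFn_mem_lowDegreeFns (by simp)))
    (sum_mem fun i _ => smul_mem _ _ (monomialFn_mem_lowDegreeFns (by simp)))

theorem finrank_lowDegreeFns_le [Fintype ι] (c : ℕ) :
    finrank (ZMod 2) (lowDegreeFns (ι := ι) c) ≤ ∑ k ∈ range (c + 1), (Fintype.card ι).choose k :=
  (finrank_range_le_card _).trans_eq <| by
    simp [Fintype.card_subtype, card_filter_le_eq_sum_card_filter_eq]

noncomputable def cosetIndicator (W : Submodule (ZMod 2) (ι → ZMod 2)) (x : ι → ZMod 2) :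
    (ι → ZMod 2) → ZMod 2 :=
  fun y => (W : Set (ι → ZMod 2)).indicator 1 (x + y)

-- `x + W` is cut out by the `codim W` equations `φ t (x + y) = 0`, so its indicator is
-- `∏ t, (1 + φ t (x + y))`, a product of `codim W` affine functions.
theorem cosetIndicator_mem_lowDegreeFns [Fintype ι]
    (W : Submodule (ZMod 2) (ι → ZMod 2)) (x : ι → ZMod 2) :
    cosetIndicator W x ∈ lowDegreeFns (finrank (ZMod 2) ((ι → ZMod 2) ⧸ W)) := by
  let B := Module.finBasis (ZMod 2) ((ι → ZMod 2) ⧸ W)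
  let φ t := B.coord t ∘ₗ W.mkQ
  have mem_iff : ∀ v, v ∈ W ↔ ∀ t, φ t v = 0 := fun v => by
    rw [← Quotient.mk_eq_zero, ← B.forall_coord_eq_zero_iff]
    rfl
  have h : cosetIndicator W x = ∏ t, fun y => (1 + φ t x) + φ t y := by
    funext y
    rw [prod_apply]
    simp only [add_assoc, ← map_add]
    by_cases hxy : x + y ∈ W
    · rw [cosetIndicator, Set.indicator_of_mem hxy]
      exact (prod_eq_one fun t _ => by rw [(mem_iff _).mp hxy t, add_zero]).symm
    · obtain ⟨t, ht⟩ := not_forall.mp fun h => hxy ((mem_iff _).mpr h)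
      have ht1 : φ t (x + y) = 1 := (by decide : ∀ a : ZMod 2, a ≠ 0 → a = 1) _ ht
      rw [cosetIndicator, Set.indicator_of_notMem hxy]
      exact (prod_eq_zero (mem_univ t) (by rw [ht1]; decide)).symm
  have := prod_mem_lowDegreeFns (s := univ) fun t _ => affine_mem_lowDegreeFns_one (1 + φ t x) (φ t)
  rwa [card_univ, Fintype.card_fin, ← h] at this

theorem linearIndependent_cosetIndicator {S : Finset (ι → ZMod 2)}
    {W : (ι → ZMod 2) → Submodule (ZMod 2) (ι → ZMod 2)}
    (hS : ∀ x ∈ S, ∀ y ∈ S, x + y ∈ W x → x = y) :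
    LinearIndependent (ZMod 2) fun x : S => cosetIndicator (W x) x := by
  classical
  refine LinearIndependent.of_comp (LinearMap.funLeft (ZMod 2) (ZMod 2) ((↑) : S → ι → ZMod 2)) ?_
  convert Pi.linearIndependent_single_one S (ZMod 2) using 1
  funext x y
  by_cases hxy : x = y
  · subst hxy
    have : (x : ι → ZMod 2) + x ∈ W x := by simp [ZModModule.add_self]
    simp [cosetIndicator, Set.indicator_of_mem this]
  · have : (x : ι → ZMod 2) + y ∉ W x := fun h => hxy (Subtype.ext (hS x x.2 y y.2 h))
    simp [cosetIndicator, Set.indicator_of_notMem this, Ne.symm hxy]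

theorem card_le_sum_choose_of_finrank_quotient_le [Fintype ι]
    {S : Finset (ι → ZMod 2)} {W : (ι → ZMod 2) → Submodule (ZMod 2) (ι → ZMod 2)}
    (hS : ∀ x ∈ S, ∀ y ∈ S, x + y ∈ W x → x = y) {c : ℕ}
    (hc : ∀ x ∈ S, finrank (ZMod 2) ((ι → ZMod 2) ⧸ W x) ≤ c) :
    S.card ≤ ∑ k ∈ range (c + 1), (Fintype.card ι).choose k :=
  calc S.card
        = finrank (ZMod 2) (span (ZMod 2) (Set.range fun x : S => cosetIndicator (W x) x)) := by
        rw [finrank_span_eq_card (linearIndependent_cosetIndicator hS), Fintype.card_coe]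
    _ ≤ finrank (ZMod 2) (lowDegreeFns (ι := ι) c) := by
        refine Submodule.finrank_mono (span_le.mpr (Set.range_subset_iff.mpr fun x => ?_))
        exact lowDegreeFns_mono (hc x x.2) (cosetIndicator_mem_lowDegreeFns (W x) x)
    _ ≤ _ := finrank_lowDegreeFns_le c

end LowDegree

theorem sum_two_pow_finrank_le_three_pow {ι : Type*} [Fintype ι]
    {S : Finset (ι → ZMod 2)} {W : (ι → ZMod 2) → Submodule (ZMod 2) (ι → ZMod 2)}
    (hS : ∀ x ∈ S, ∀ y ∈ S, x + y ∈ W x → x = y) :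
    ∑ x ∈ S, 2 ^ finrank (ZMod 2) (W x) ≤ 3 ^ Fintype.card ι := by
  have hdim : ∀ x, finrank (ZMod 2) (W x) =
      Fintype.card ι - finrank (ZMod 2) ((ι → ZMod 2) ⧸ W x) := fun x => by
    have := (W x).finrank_quotient_add_finrank
    rw [Module.finrank_fintype_fun_eq_card] at this
    omega
  simp only [hdim]
  refine sum_two_pow_sub_le_three_pow (fun x _ => ?_) fun k _ => ?_
  · simpa [Module.finrank_fintype_fun_eq_card] using (W x).finrank_quotient_le
  · exact card_le_sum_choose_of_finrank_quotient_le
      (fun x hx y hy => hS x (mem_filter.mp hx).1 y (mem_filter.mp hy).1)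
      fun x hx => (mem_filter.mp hx).2

theorem PropertyStar.eq_of_add_mem {n : ℕ} {A : (Fin n → ZMod 2) → Finset (Fin n → ZMod 2)}
    (hA : PropertyStar A) {x y : Fin n → ZMod 2} (hy : (A y).Nonempty) (h0 : 0 ∈ A x)
    (hxy : x + y ∈ A x) : x = y := by
  by_contra hne
  refine hy.ne_empty (hA x y ⟨0, h0, x + y, hxy, fun h => hne ?_, ?_⟩)
  · rw [← sub_eq_zero, ZModModule.sub_eq_add, ← h]
  · rw [add_zero, ← add_assoc, ZModModule.add_self, zero_add]

theorem card_eq_two_pow_finrank {V : Type*} [AddCommGroup V] [Module (ZMod 2) V]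
    [Module.Finite (ZMod 2) V] {s : Finset V} {W : Submodule (ZMod 2) V} (h : (s : Set V) = W) :
    s.card = 2 ^ finrank (ZMod 2) W := by
  have hcard : Nat.card (s : Set V) = Nat.card W := by rw [h]; rfl
  calc s.card = Nat.card (s : Set V) := (Nat.card_eq_finsetCard s).symm
    _ = Nat.card (ZMod 2) ^ finrank (ZMod 2) W := hcard.trans Module.natCard_eq_pow_finrank
    _ = 2 ^ finrank (ZMod 2) W := by rw [Nat.card_zmod]

theorem stmt18_general (n : ℕ)
    (A : (Fin n → ZMod 2) → Finset (Fin n → ZMod 2))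
    (hstar : PropertyStar A)
    (hsub : ∀ x : Fin n → ZMod 2, A x ≠ ∅ →
      ∃ W : Submodule (ZMod 2) (Fin n → ZMod 2), (A x : Set (Fin n → ZMod 2)) = W) :
    ∑ x : Fin n → ZMod 2, (A x).card ≤ 3 ^ n := by
  classical
  let S := univ.filter fun x => (A x).Nonempty
  let W x := span (ZMod 2) (A x : Set (Fin n → ZMod 2))
  have hW : ∀ x ∈ S, (A x : Set (Fin n → ZMod 2)) = W x := fun x hx => by
    obtain ⟨U, hU⟩ := hsub x (mem_filter.mp hx).2.ne_empty
    simp only [W, hU, span_eq]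
  have hmem : ∀ x ∈ S, ∀ a, a ∈ A x ↔ a ∈ W x := fun x hx a => by
    rw [← mem_coe, hW x hx, SetLike.mem_coe]
  have hS : ∀ x ∈ S, ∀ y ∈ S, x + y ∈ W x → x = y := fun x hx y hy hxy =>
    hstar.eq_of_add_mem (mem_filter.mp hy).2 ((hmem x hx 0).mpr (W x).zero_mem)
      ((hmem x hx _).mpr hxy)
  calc ∑ x, (A x).card = ∑ x ∈ S, (A x).card :=
        (sum_filter_of_ne fun x _ h => card_ne_zero.mp h).symm
    _ = ∑ x ∈ S, 2 ^ finrank (ZMod 2) (W x) :=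
        sum_congr rfl fun x hx => card_eq_two_pow_finrank (hW x hx)
    _ ≤ 3 ^ Fintype.card (Fin n) := sum_two_pow_finrank_le_three_pow hS
    _ = 3 ^ n := by rw [Fintype.card_fin]

theorem stmt18 (n : ℕ) (hn : 1 ≤ n)
    (A : (Fin n → ZMod 2) → Finset (Fin n → ZMod 2))
    (hstar : PropertyStar A)
    (hsub : ∀ x : Fin n → ZMod 2, A x ≠ ∅ →
      ∃ W : Submodule (ZMod 2) (Fin n → ZMod 2), (A x : Set (Fin n → ZMod 2)) = W) :
    ∑ x : Fin n → ZMod 2, (A x).card ≤ 3 ^ n :=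
  stmt18_general n A hstar hsub
end
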